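/- arXiv:1209.1371 — 3 statements merged into one kernel-verified Lean document; each statement's English description precedes it below -/
import Mathlib

section
/- Let S(t,a) and C(t,a) satisfy the system (∂/∂t + ∂/∂a)S = σ·N - (i+m0)·S + r·C and (∂/∂t + ∂/∂a)C = γ·N + i·S - (m1+r)·C, where N = S + C. Then at every point where N(t,a) > 0, the prevalence p(t,a) = C(t,a)/N(t,a) satisfies (∂/∂a + ∂/∂t)p = (1-p)·(i - p·(m1-m0)) - r·p + μ, where μ = γ·(1-p) - p·σ. -/
/-- PDE version: if S, C satisfy the two-dimensional illness-death system with
migration, then at every point where N = S + C > 0 the prevalence p = C/N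
satisfies (∂/∂a + ∂/∂t)p = (1-p)(i - p(m1-m0)) - r·p + μ, μ = γ(1-p) - p·σ. -/
theorem prevalence_pde
    (S C i r m0 m1 σ γ St Sa Ct Ca : ℝ × ℝ → ℝ)
    (hSt : ∀ t a, HasDerivAt (fun s => S (s, a)) (St (t, a)) t)
    (hSa : ∀ t a, HasDerivAt (fun s => S (t, s)) (Sa (t, a)) a)
    (hCt : ∀ t a, HasDerivAt (fun s => C (s, a)) (Ct (t, a)) t)
    (hCa : ∀ t a, HasDerivAt (fun s => C (t, s)) (Ca (t, a)) a)
    (hSsys : ∀ x, St x + Sa x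
      = σ x * (S x + C x) - (i x + m0 x) * S x + r x * C x)
    (hCsys : ∀ x, Ct x + Ca x
      = γ x * (S x + C x) + i x * S x - (m1 x + r x) * C x)
    (t a : ℝ) (hN : S (t, a) + C (t, a) > 0) :
    ∃ pt pa : ℝ,
      HasDerivAt (fun s => C (s, a) / (S (s, a) + C (s, a))) pt t ∧
      HasDerivAt (fun s => C (t, s) / (S (t, s) + C (t, s))) pa a ∧
      pa + pt =
        (1 - C (t, a) / (S (t, a) + C (t, a)))
            * (i (t, a) - (C (t, a) / (S (t, a) + C (t, a)))
                * (m1 (t, a) - m0 (t, a)))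
          - r (t, a) * (C (t, a) / (S (t, a) + C (t, a)))
          + (γ (t, a) * (1 - C (t, a) / (S (t, a) + C (t, a)))
              - (C (t, a) / (S (t, a) + C (t, a))) * σ (t, a)) := by

  have hne : S (t, a) + C (t, a) ≠ 0 := ne_of_gt hN
  have ht : HasDerivAt (fun s => C (s, a) / (S (s, a) + C (s, a)))
      ((Ct (t,a) * (S (t,a) + C (t,a)) - C (t,a) * (St (t,a) + Ct (t,a)))
        / (S (t,a) + C (t,a))^2) t :=
    (hCt t a).div ((hSt t a).add (hCt t a)) hne
  have ha : HasDerivAt (fun s => C (t, s) / (S (t, s) + C (t, s)))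
      ((Ca (t,a) * (S (t,a) + C (t,a)) - C (t,a) * (Sa (t,a) + Ca (t,a)))
        / (S (t,a) + C (t,a))^2) a :=
    (hCa t a).div ((hSa t a).add (hCa t a)) hne
  refine ⟨_, _, ht, ha, ?_⟩
  have e1 := hSsys (t, a)
  have e2 := hCsys (t, a)
  have hSa' : Sa (t, a) = σ (t,a) * (S (t,a) + C (t,a))
      - (i (t,a) + m0 (t,a)) * S (t,a) + r (t,a) * C (t,a) - St (t,a) := by
    linarith [e1]
  have hCa' : Ca (t, a) = γ (t,a) * (S (t,a) + C (t,a))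
      + i (t,a) * S (t,a) - (m1 (t,a) + r (t,a)) * C (t,a) - Ct (t,a) := by
    linarith [e2]
  rw [hSa', hCa']
  field_simp
  ring
end

section
/- Conversely to the previous statement: if S and C satisfy the system (∂/∂t + ∂/∂a)S = σ·N - (i+m0)·S + r·C and (∂/∂t + ∂/∂a)C = γ·N + i·S - (m1+r)·C with N = S + C > 0, then p = C/N satisfies (∂/∂a + ∂/∂t)p = (1-p)(i - p(m1-m0)) - r·p + γ(1-p) - p·σ; and any solution of the PDE arising this way with S ≥ 0 and C ≥ 0 satisfies 0 ≤ p(t,a) ≤ 1. -/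
/-!
The prevalence `p = C / N` of a population split as `N = S + C` has derivative
`(C' S - C S') / N²` along any direction, so along the characteristic direction `∂ₜ + ∂ₐ`
it is a rational expression in the right-hand sides of the system; substituting them and writing
`S = (1 - p) N`, `C = p N` makes `N` cancel, leaving the prevalence equation.
Nonnegativity of `S` and `C` gives `0 ≤ C ≤ S + C`, hence `0 ≤ p ≤ 1`.
-/

theorem HasDerivAt.div_add_self {u v : ℝ → ℝ} {u' v' x : ℝ} (hu : HasDerivAt u u' x)
    (hv : HasDerivAt v v' x) (hx : u x + v x ≠ 0) :
    HasDerivAt (fun s => v s / (u s + v s)) ((v' * u x - v x * u') / (u x + v x) ^ 2) x :=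
  (hv.fun_div (hu.fun_add hv) hx).congr_deriv (by ring)

theorem div_add_self_mem_Icc {s c : ℝ} (hs : 0 ≤ s) (hc : 0 ≤ c) :
    c / (s + c) ∈ Set.Icc (0 : ℝ) 1 :=
  ⟨div_nonneg hc (add_nonneg hs hc),
    div_le_one_of_le₀ (le_add_of_nonneg_left hs) (add_nonneg hs hc)⟩

theorem prevalence_transport_eq {S C dS dC i r m0 m1 σ γ : ℝ} (hN : S + C ≠ 0)
    (hS : dS = σ * (S + C) - (i + m0) * S + r * C)
    (hC : dC = γ * (S + C) + i * S - (m1 + r) * C) :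
    (dC * S - C * dS) / (S + C) ^ 2 =
      (1 - C / (S + C)) * (i - C / (S + C) * (m1 - m0)) - r * (C / (S + C))
        + (γ * (1 - C / (S + C)) - C / (S + C) * σ) := by
  field_simp
  linear_combination S * hC - C * hS

/-- Converse: if S ≥ 0, C ≥ 0 satisfy the illness-death system with migration
and N = S + C > 0, then p = C/N satisfies the prevalence PDE and 0 ≤ p ≤ 1. -/
theorem system_to_prevalence
    (S C i r m0 m1 σ γ St Sa Ct Ca : ℝ × ℝ → ℝ)
    (hSnn : ∀ x, S x ≥ 0) (hCnn : ∀ x, C x ≥ 0)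
    (hNpos : ∀ x, S x + C x > 0)
    (hSt : ∀ t a, HasDerivAt (fun s => S (s, a)) (St (t, a)) t)
    (hSa : ∀ t a, HasDerivAt (fun s => S (t, s)) (Sa (t, a)) a)
    (hCt : ∀ t a, HasDerivAt (fun s => C (s, a)) (Ct (t, a)) t)
    (hCa : ∀ t a, HasDerivAt (fun s => C (t, s)) (Ca (t, a)) a)
    (hSsys : ∀ x, St x + Sa x
      = σ x * (S x + C x) - (i x + m0 x) * S x + r x * C x)
    (hCsys : ∀ x, Ct x + Ca x
      = γ x * (S x + C x) + i x * S x - (m1 x + r x) * C x) :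
    ∀ t a : ℝ,
      (∃ pt pa : ℝ,
        HasDerivAt (fun s => C (s, a) / (S (s, a) + C (s, a))) pt t ∧
        HasDerivAt (fun s => C (t, s) / (S (t, s) + C (t, s))) pa a ∧
        pa + pt =
          (1 - C (t, a) / (S (t, a) + C (t, a)))
              * (i (t, a) - (C (t, a) / (S (t, a) + C (t, a)))
                  * (m1 (t, a) - m0 (t, a)))
            - r (t, a) * (C (t, a) / (S (t, a) + C (t, a)))
            + (γ (t, a) * (1 - C (t, a) / (S (t, a) + C (t, a)))
                - (C (t, a) / (S (t, a) + C (t, a))) * σ (t, a))) ∧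
      0 ≤ C (t, a) / (S (t, a) + C (t, a)) ∧
      C (t, a) / (S (t, a) + C (t, a)) ≤ 1 := by
  intro t a
  have hN : S (t, a) + C (t, a) ≠ 0 := (hNpos (t, a)).ne'
  refine ⟨⟨_, _, (hSt t a).div_add_self (hCt t a) hN, (hSa t a).div_add_self (hCa t a) hN,
    ?_⟩, div_add_self_mem_Icc (hSnn (t, a)) (hCnn (t, a))⟩
  rw [← prevalence_transport_eq hN (hSsys (t, a)) (hCsys (t, a))]
  ring
end

section
/- Conversely: let a₀ = ã - t̃ and suppose y : ℝ → ℝ solves y'(τ) = α(τ, τ + a₀) + β(τ, τ + a₀)·y(τ) + γ(τ, τ + a₀)·y(τ)² with y(0) = p(0, a₀), where p solves the PDE (∂/∂t + ∂/∂a)p = α + β·p + γ·p² with the same initial condition along the characteristic and the functions α + β·y + γ·y² are locally Lipschitz in y (guaranteeing uniqueness of the ODE solution). Then y(t̃) = p(t̃, ã). -/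
/-!
Along the characteristic `τ ↦ (τ, τ + a₀)` the chain rule turns the PDE into the ODE solved by
`y`, so `τ ↦ p (τ, τ + a₀)` and `y` solve the same locally Lipschitz ODE and agree at `τ = 0`.
Local uniqueness makes the set where two such solutions agree open; it is also closed, hence all
of `ℝ`.
-/

open Filter Topology Set

theorem hasDerivAt_comp_add_const_of_partials {E : Type*} [NormedAddCommGroup E]
    [NormedSpace ℝ E] {p : ℝ × ℝ → E} {pt pa : E} {t c : ℝ}
    (hp : DifferentiableAt ℝ p (t, t + c))
    (hpt : HasDerivAt (fun s => p (s, t + c)) pt t)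
    (hpa : HasDerivAt (fun s => p (t, s)) pa (t + c)) :
    HasDerivAt (fun s => p (s, s + c)) (pt + pa) t := by
  set D := fderiv ℝ p (t, t + c)
  have hpt' : pt = D (1, 0) :=
    hpt.unique <| hp.hasFDerivAt.comp_hasDerivAt t
      ((hasDerivAt_id t).prodMk (hasDerivAt_const t (t + c)))
  have hpa' : pa = D (0, 1) :=
    hpa.unique <| hp.hasFDerivAt.comp_hasDerivAt (t + c)
      ((hasDerivAt_const (t + c) t).prodMk (hasDerivAt_id (t + c)))
  have hdiag : D (1, 1) = D (1, 0) + D (0, 1) := by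
    rw [← map_add, Prod.mk_add_mk, add_zero, zero_add]
  rw [hpt', hpa', ← hdiag]
  exact hp.hasFDerivAt.comp_hasDerivAt t
    ((hasDerivAt_id t).prodMk ((hasDerivAt_id t).add_const c))

theorem ODE_solution_unique_of_locallyLipschitz {E : Type*} [NormedAddCommGroup E]
    [NormedSpace ℝ E] {v : ℝ × E → E} (hv : LocallyLipschitz v) {f g : ℝ → E}
    (hf : ∀ t, HasDerivAt f (v (t, f t)) t) (hg : ∀ t, HasDerivAt g (v (t, g t)) t)
    {t₀ : ℝ} (heq : f t₀ = g t₀) : f = g := by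
  have hfc : Continuous f := continuous_iff_continuousAt.2 fun t => (hf t).continuousAt
  have hgc : Continuous g := continuous_iff_continuousAt.2 fun t => (hg t).continuousAt
  have hopen : IsOpen {t | f t = g t} := by
    refine isOpen_iff_mem_nhds.2 fun t₁ (h₁ : f t₁ = g t₁) => ?_
    obtain ⟨K, U, hU, hK⟩ := hv (t₁, f t₁)
    have hslice : ∀ t, LipschitzOnWith K (v ∘ Prod.mk t) (Prod.mk t ⁻¹' U) := fun t => by
      simpa only [mul_one] using
        hK.comp (LipschitzWith.prodMk_left t).lipschitzOnWith (mapsTo_preimage _ U)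
    have hfU : ∀ᶠ t in 𝓝 t₁, (t, f t) ∈ U :=
      (continuous_id.prodMk hfc).continuousAt.preimage_mem_nhds hU
    have hgU : ∀ᶠ t in 𝓝 t₁, (t, g t) ∈ U :=
      (continuous_id.prodMk hgc).continuousAt.preimage_mem_nhds (h₁ ▸ hU)
    exact ODE_solution_unique_of_eventually (.of_forall hslice)
      (hfU.mono fun t ht => ⟨hf t, ht⟩) (hgU.mono fun t ht => ⟨hg t, ht⟩) h₁
  have huniv := IsClopen.eq_univ ⟨isClosed_eq hfc hgc, hopen⟩ ⟨t₀, heq⟩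
  exact funext fun t => (huniv ▸ mem_univ t :)

theorem characteristic_ode_to_pde_general
    (p α β γ pt pa : ℝ × ℝ → ℝ) (y : ℝ → ℝ) (tTilde aTilde : ℝ)
    (hdiff : Differentiable ℝ p)
    (hpt : ∀ t a, HasDerivAt (fun s => p (s, a)) (pt (t, a)) t)
    (hpa : ∀ t a, HasDerivAt (fun s => p (t, s)) (pa (t, a)) a)
    (hPDE : ∀ x, pt x + pa x = α x + β x * p x + γ x * p x ^ 2)
    (hlip : LocallyLipschitz (fun q : ℝ × ℝ =>
      α (q.1, q.1 + (aTilde - tTilde)) + β (q.1, q.1 + (aTilde - tTilde)) * q.2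
        + γ (q.1, q.1 + (aTilde - tTilde)) * q.2 ^ 2))
    (hy : ∀ τ : ℝ, HasDerivAt y
      (α (τ, τ + (aTilde - tTilde)) + β (τ, τ + (aTilde - tTilde)) * y τ
        + γ (τ, τ + (aTilde - tTilde)) * y τ ^ 2) τ)
    (hy0 : y 0 = p (0, aTilde - tTilde)) :
    y tTilde = p (tTilde, aTilde) := by
  set a₀ := aTilde - tTilde
  have hchar : ∀ τ, HasDerivAt (fun s => p (s, s + a₀))
      (α (τ, τ + a₀) + β (τ, τ + a₀) * p (τ, τ + a₀)
        + γ (τ, τ + a₀) * p (τ, τ + a₀) ^ 2) τ :=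
    fun τ => hPDE (τ, τ + a₀) ▸
      hasDerivAt_comp_add_const_of_partials (hdiff _) (hpt τ (τ + a₀)) (hpa τ (τ + a₀))
  have hy0' : y 0 = p (0, 0 + a₀) := by rw [zero_add, hy0]
  have := congrFun (ODE_solution_unique_of_locallyLipschitz hlip hy hchar hy0') tTilde
  rwa [add_sub_cancel] at this

/-- Conversely: under a local Lipschitz condition guaranteeing uniqueness,
the solution y of the characteristic Riccati ODE with y(0) = p(0, a₀),
a₀ = aTilde - tTilde, satisfies y(tTilde) = p(tTilde, aTilde). -/
theorem characteristic_ode_to_pde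
    (p α β γ pt pa : ℝ × ℝ → ℝ) (y : ℝ → ℝ) (tTilde aTilde : ℝ)
    (ht : 0 ≤ tTilde)
    (hdiff : Differentiable ℝ p)
    (hpt : ∀ t a, HasDerivAt (fun s => p (s, a)) (pt (t, a)) t)
    (hpa : ∀ t a, HasDerivAt (fun s => p (t, s)) (pa (t, a)) a)
    (hPDE : ∀ x, pt x + pa x = α x + β x * p x + γ x * p x ^ 2)
    (hcont : Continuous α) (hcontβ : Continuous β) (hcontγ : Continuous γ)
    (hlip : LocallyLipschitz (fun q : ℝ × ℝ =>
      α (q.1, q.1 + (aTilde - tTilde)) + β (q.1, q.1 + (aTilde - tTilde)) * q.2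
        + γ (q.1, q.1 + (aTilde - tTilde)) * q.2 ^ 2))
    (hy : ∀ τ : ℝ, HasDerivAt y
      (α (τ, τ + (aTilde - tTilde)) + β (τ, τ + (aTilde - tTilde)) * y τ
        + γ (τ, τ + (aTilde - tTilde)) * y τ ^ 2) τ)
    (hy0 : y 0 = p (0, aTilde - tTilde)) :
    y tTilde = p (tTilde, aTilde) :=
  characteristic_ode_to_pde_general p α β γ pt pa y tTilde aTilde hdiff hpt hpa hPDE hlip hy hy0
end
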